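/- Define ϖ(ε) = λ(ε)/ν(ε) for ε ∈ (-1,1). Then ϖ(ε) tends to 1 as ε tends to -1 from the right (within (-1,1)), and ϖ(ε) tends to 0 as ε tends to 1 from the left (within (-1,1)). -/

import Mathlib

open Real Filter Set intervalIntegral

lemma base_pos {ε : ℝ} (hε : ε ∈ Set.Ioo (-1:ℝ) 1) (θ : ℝ) : 0 < 1 + ε * Real.cos (2*θ) := by
  obtain ⟨h1, h2⟩ := hε
  have habs : |ε * Real.cos (2*θ)| ≤ |ε| := by
    rw [abs_mul]
    calc |ε| * |Real.cos (2*θ)| ≤ |ε| * 1 := by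
          exact mul_le_mul_of_nonneg_left (Real.abs_cos_le_one _) (abs_nonneg _)
      _ = |ε| := mul_one _
  have h3 : |ε| < 1 := abs_lt.mpr ⟨h1, h2⟩
  have := neg_abs_le (ε * Real.cos (2*θ))
  linarith

lemma cont_pow {ε : ℝ} (hε : ε ∈ Set.Ioo (-1:ℝ) 1) (p : ℝ) :
    Continuous fun θ : ℝ => (1 + ε * Real.cos (2*θ)) ^ p := by
  apply Continuous.rpow_const
  · exact continuous_const.add (continuous_const.mul (Real.continuous_cos.comp
      (continuous_const.mul continuous_id)))
  · exact fun θ => Or.inl (base_pos hε θ).ne'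

noncomputable def lam (ε : ℝ) : ℝ :=
  (1/4) * ∫ θ in (0:ℝ)..(2*Real.pi), Real.cos θ ^ 2 * (1 + ε * Real.cos (2*θ)) ^ (-(3:ℝ)/2)

noncomputable def mu (ε : ℝ) : ℝ :=
  (1/4) * ∫ θ in (0:ℝ)..(2*Real.pi), Real.sin θ ^ 2 * (1 + ε * Real.cos (2*θ)) ^ (-(3:ℝ)/2)

noncomputable def nu (ε : ℝ) : ℝ :=
  (1/4) * ∫ θ in (0:ℝ)..(2*Real.pi), (1 + ε * Real.cos (2*θ)) ^ (-(3:ℝ)/2)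

noncomputable def Gg (ε : ℝ) : ℝ :=
  (1/4) * ∫ θ in (0:ℝ)..(2*Real.pi), (1 + ε * Real.cos (2*θ)) ^ (-(1:ℝ)/2)

lemma intInt {ε : ℝ} (hε : ε ∈ Set.Ioo (-1:ℝ) 1) (p : ℝ) :
    IntervalIntegrable (fun θ => (1 + ε * Real.cos (2*θ)) ^ p) MeasureTheory.volume 0 (2*Real.pi) :=
  (cont_pow hε p).intervalIntegrable _ _

lemma intInt' {ε : ℝ} (hε : ε ∈ Set.Ioo (-1:ℝ) 1) :
    IntervalIntegrable (fun θ => Real.cos θ ^ 2 * (1 + ε * Real.cos (2*θ)) ^ (-(3:ℝ)/2))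
      MeasureTheory.volume 0 (2*Real.pi) :=
  ((Real.continuous_cos.pow 2).mul (cont_pow hε _)).intervalIntegrable _ _

lemma nu_pos {ε : ℝ} (hε : ε ∈ Set.Ioo (-1:ℝ) 1) : 0 < nu ε := by
  have := intervalIntegral.intervalIntegral_pos_of_pos (f := fun θ => (1 + ε * Real.cos (2*θ)) ^ (-(3:ℝ)/2))
    (intInt hε _) (fun θ => Real.rpow_pos_of_pos (base_pos hε θ) _)
    (by positivity : (0:ℝ) < 2*Real.pi)
  unfold nu; linarith

lemma identity {ε : ℝ} (hε : ε ∈ Set.Ioo (-1:ℝ) 1) :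
    2*ε*lam ε + (1-ε)*nu ε = Gg ε := by
  have key : ∀ θ : ℝ, (1 + ε * Real.cos (2*θ)) ^ (-(1:ℝ)/2) =
      2*ε*(Real.cos θ ^ 2 * (1 + ε * Real.cos (2*θ)) ^ (-(3:ℝ)/2))
      + (1-ε)*((1 + ε * Real.cos (2*θ)) ^ (-(3:ℝ)/2)) := by
    intro θ
    have ha := base_pos hε θ
    have h1 : (1 + ε * Real.cos (2*θ)) ^ (-(1:ℝ)/2) =
        (1 + ε * Real.cos (2*θ)) * (1 + ε * Real.cos (2*θ)) ^ (-(3:ℝ)/2) := by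
      rw [show (-(1:ℝ)/2) = 1 + (-(3:ℝ)/2) by norm_num, Real.rpow_add ha, Real.rpow_one]
    rw [h1, Real.cos_two_mul]; ring
  have hsplit : (∫ θ in (0:ℝ)..(2*Real.pi), (1 + ε * Real.cos (2*θ)) ^ (-(1:ℝ)/2)) =
      2*ε*(∫ θ in (0:ℝ)..(2*Real.pi), Real.cos θ ^ 2 * (1 + ε * Real.cos (2*θ)) ^ (-(3:ℝ)/2))
      + (1-ε)*(∫ θ in (0:ℝ)..(2*Real.pi), (1 + ε * Real.cos (2*θ)) ^ (-(3:ℝ)/2)) := by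
    rw [← intervalIntegral.integral_const_mul, ← intervalIntegral.integral_const_mul,
      ← intervalIntegral.integral_add ((intInt' hε).const_mul _) ((intInt hε _).const_mul _)]
    exact intervalIntegral.integral_congr fun θ _ => key θ
  unfold lam nu Gg
  rw [hsplit]; ring

lemma pointwise_bound {a c : ℝ} (ha : 0 < a) (hc : 0 < c) :
    a ^ (-(1:ℝ)/2) ≤ a ^ (-(3:ℝ)/2) / c^2 + c := by
  rcases le_or_gt (a ^ (-(1:ℝ)/2)) c with h | h
  · have : 0 ≤ a ^ (-(3:ℝ)/2) / c^2 := by positivity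
    linarith
  · have hsq : c^2 < a ^ (-(1:ℝ)) := by
      have h2 : (a ^ (-(1:ℝ)/2))^2 = a ^ (-(1:ℝ)) := by
        rw [← Real.rpow_natCast (a ^ (-(1:ℝ)/2)) 2, ← Real.rpow_mul ha.le]
        norm_num
      calc c^2 < (a ^ (-(1:ℝ)/2))^2 := by nlinarith [hc]
        _ = a ^ (-(1:ℝ)) := h2
    have h32 : a ^ (-(3:ℝ)/2) = a ^ (-(1:ℝ)/2) * a ^ (-(1:ℝ)) := by
      rw [← Real.rpow_add ha]; norm_num
    have hp : 0 < a ^ (-(1:ℝ)/2) := Real.rpow_pos_of_pos ha _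
    have : a ^ (-(1:ℝ)/2) * c^2 ≤ a ^ (-(3:ℝ)/2) := by
      rw [h32]; nlinarith
    have hle : a ^ (-(1:ℝ)/2) ≤ a ^ (-(3:ℝ)/2) / c^2 := by
      rw [le_div_iff₀ (by positivity)]; linarith
    linarith [hc.le]

lemma Gg_nonneg {ε : ℝ} (hε : ε ∈ Set.Ioo (-1:ℝ) 1) : 0 ≤ Gg ε := by
  unfold Gg
  have h : 0 ≤ ∫ θ in (0:ℝ)..(2*Real.pi), (1 + ε * Real.cos (2*θ)) ^ (-(1:ℝ)/2) := by
    apply intervalIntegral.integral_nonneg (by positivity)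
    exact fun θ _ => (Real.rpow_pos_of_pos (base_pos hε θ) _).le
  linarith

lemma Gg_le {ε : ℝ} (hε : ε ∈ Set.Ioo (-1:ℝ) 1) :
    Gg ε ≤ (1 + Real.pi/2) * nu ε ^ ((1:ℝ)/3) := by
  set c := nu ε ^ ((1:ℝ)/3) with hc
  have hn := nu_pos hε
  have hcpos : 0 < c := Real.rpow_pos_of_pos hn _
  have hmono : (∫ θ in (0:ℝ)..(2*Real.pi), (1 + ε * Real.cos (2*θ)) ^ (-(1:ℝ)/2)) ≤
      ∫ θ in (0:ℝ)..(2*Real.pi), ((1 + ε * Real.cos (2*θ)) ^ (-(3:ℝ)/2) / c^2 + c) := by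
    apply intervalIntegral.integral_mono_on (by positivity) (intInt hε _)
      ((((cont_pow hε _).div_const _).add continuous_const).intervalIntegrable _ _)
    intro θ _
    exact pointwise_bound (base_pos hε θ) hcpos
  have hsplit : (∫ θ in (0:ℝ)..(2*Real.pi), ((1 + ε * Real.cos (2*θ)) ^ (-(3:ℝ)/2) / c^2 + c))
      = (∫ θ in (0:ℝ)..(2*Real.pi), (1 + ε * Real.cos (2*θ)) ^ (-(3:ℝ)/2)) / c^2
        + 2*Real.pi*c := by
    rw [intervalIntegral.integral_add ((intInt hε _).div_const _)
      (intervalIntegrable_const), intervalIntegral.integral_div,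
      intervalIntegral.integral_const, smul_eq_mul]
    ring
  have h4 : Gg ε ≤ nu ε / c^2 + (Real.pi/2)*c := by
    unfold Gg nu
    calc (1/4) * ∫ θ in (0:ℝ)..(2*Real.pi), (1 + ε * Real.cos (2*θ)) ^ (-(1:ℝ)/2)
        ≤ (1/4) * ((∫ θ in (0:ℝ)..(2*Real.pi), (1 + ε * Real.cos (2*θ)) ^ (-(3:ℝ)/2)) / c^2
            + 2*Real.pi*c) := by
          rw [← hsplit]; linarith
      _ = ((1/4) * ∫ θ in (0:ℝ)..(2*Real.pi), (1 + ε * Real.cos (2*θ)) ^ (-(3:ℝ)/2)) / c^2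
            + (Real.pi/2)*c := by ring
  have h3 : c^3 = nu ε := by
    rw [hc, ← Real.rpow_natCast (nu ε ^ ((1:ℝ)/3)) 3, ← Real.rpow_mul hn.le]
    norm_num
  have hcc : nu ε / c^2 = c := by
    rw [← h3]; field_simp
  rw [← hc] at *
  rw [hcc] at h4
  linarith

lemma nu_lb {ε a δ : ℝ} (hε : ε ∈ Set.Ioo (-1:ℝ) 1) (hδ : 0 < δ)
    (hsd : Real.sqrt δ ≤ 3/4) (ha : 0 ≤ a) (hab : a + Real.sqrt δ ≤ 2*Real.pi)
    (hbase : ∀ θ ∈ Set.Icc a (a + Real.sqrt δ), 1 + ε * Real.cos (2*θ) ≤ 3*δ) :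
    (1/24)/δ ≤ nu ε := by
  have hsd0 : 0 ≤ Real.sqrt δ := Real.sqrt_nonneg δ
  have h3δ : 0 < 3*δ := by linarith
  have hconst : ∀ θ ∈ Set.Icc a (a + Real.sqrt δ),
      (3*δ) ^ (-(3:ℝ)/2) ≤ (1 + ε * Real.cos (2*θ)) ^ (-(3:ℝ)/2) := fun θ hθ =>
    Real.rpow_le_rpow_of_nonpos (base_pos hε θ) (hbase θ hθ) (by norm_num)
  have hI1 : Real.sqrt δ * (3*δ) ^ (-(3:ℝ)/2) ≤
      ∫ θ in a..(a + Real.sqrt δ), (1 + ε * Real.cos (2*θ)) ^ (-(3:ℝ)/2) := by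
    have := intervalIntegral.integral_mono_on (μ := MeasureTheory.volume) (a := a) (b := a + Real.sqrt δ)
      (by linarith) intervalIntegrable_const ((cont_pow hε _).intervalIntegrable _ _) hconst
    rwa [intervalIntegral.integral_const, smul_eq_mul, add_sub_cancel_left] at this
  have hI2 : (∫ θ in a..(a + Real.sqrt δ), (1 + ε * Real.cos (2*θ)) ^ (-(3:ℝ)/2)) ≤
      ∫ θ in (0:ℝ)..(2*Real.pi), (1 + ε * Real.cos (2*θ)) ^ (-(3:ℝ)/2) := by
    apply intervalIntegral.integral_mono_interval ha (by linarith) hab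
    · filter_upwards with θ using (Real.rpow_pos_of_pos (base_pos hε θ) _).le
    · exact intInt hε _
  have hm : (3*δ) ^ (-(3:ℝ)/2) = (3:ℝ) ^ (-(3:ℝ)/2) * δ ^ (-(3:ℝ)/2) :=
    Real.mul_rpow (by norm_num) hδ.le
  have h3 : (1/6 : ℝ) ≤ (3:ℝ) ^ (-(3:ℝ)/2) := by
    have hx2 : ((3:ℝ) ^ ((3:ℝ)/2))^2 = 27 := by
      rw [← Real.rpow_natCast ((3:ℝ) ^ ((3:ℝ)/2)) 2, ← Real.rpow_mul (by norm_num)]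
      rw [show (3:ℝ)/2 * (2:ℕ) = ((3:ℕ):ℝ) by push_cast; ring, Real.rpow_natCast]
      norm_num
    have hx0 : 0 < (3:ℝ) ^ ((3:ℝ)/2) := Real.rpow_pos_of_pos (by norm_num) _
    have hx6 : (3:ℝ) ^ ((3:ℝ)/2) ≤ 6 := by nlinarith
    rw [show (-(3:ℝ)/2) = -((3:ℝ)/2) by ring, Real.rpow_neg (by norm_num)]
    rw [le_inv_comm₀ (by norm_num) hx0]
    linarith
  have hd : Real.sqrt δ * δ ^ (-(3:ℝ)/2) = δ⁻¹ := by
    rw [Real.sqrt_eq_rpow, ← Real.rpow_add hδ, show (1:ℝ)/2 + -(3:ℝ)/2 = -1 by ring,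
      Real.rpow_neg_one]
  have hinv : 0 < δ⁻¹ := by positivity
  have hδ32 : 0 < δ ^ (-(3:ℝ)/2) := Real.rpow_pos_of_pos hδ _
  have hchain : (1/6 : ℝ) * δ⁻¹ ≤ Real.sqrt δ * (3*δ) ^ (-(3:ℝ)/2) := by
    rw [hm, show Real.sqrt δ * ((3:ℝ) ^ (-(3:ℝ)/2) * δ ^ (-(3:ℝ)/2)) =
      (3:ℝ) ^ (-(3:ℝ)/2) * (Real.sqrt δ * δ ^ (-(3:ℝ)/2)) by ring, hd]
    nlinarith
  unfold nu
  rw [div_eq_mul_inv]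
  linarith


lemma sqrt_le_34 {δ : ℝ} (h : δ ≤ 1/2) : Real.sqrt δ ≤ 3/4 := by
  have h916 : Real.sqrt (9/16) = 3/4 := by
    rw [show (9:ℝ)/16 = (3/4)^2 by norm_num, Real.sqrt_sq (by norm_num)]
  calc Real.sqrt δ ≤ Real.sqrt (9/16) := Real.sqrt_le_sqrt (by linarith)
    _ = 3/4 := h916

lemma nu_lb_neg {ε : ℝ} (hε : ε ∈ Set.Ioo (-1:ℝ) 1) (h : ε < -1/2) :
    (1/24)/(1+ε) ≤ nu ε := by
  have hδ : 0 < 1+ε := by linarith [hε.1]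
  have hδ2 : 1+ε ≤ 1/2 := by linarith
  have hsd := sqrt_le_34 hδ2
  apply nu_lb hε hδ hsd le_rfl
  · have := Real.pi_gt_three; linarith
  · intro θ hθ
    simp only [Set.mem_Icc, zero_add] at hθ
    have hθ2 : θ^2 ≤ 1+ε := by
      have := Real.sq_sqrt hδ.le
      nlinarith [hθ.1, hθ.2]
    have hs : Real.sin θ ^ 2 ≤ 1+ε := le_trans (Real.sin_sq_le_sq) hθ2
    have hpy := Real.sin_sq_add_cos_sq θ
    rw [Real.cos_two_mul]
    nlinarith [sq_nonneg (Real.sin θ), hε.2]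

lemma nu_lb_pos {ε : ℝ} (hε : ε ∈ Set.Ioo (-1:ℝ) 1) (h : 1/2 < ε) :
    (1/24)/(1-ε) ≤ nu ε := by
  have hδ : 0 < 1-ε := by linarith [hε.2]
  have hδ2 : 1-ε ≤ 1/2 := by linarith
  have hsd := sqrt_le_34 hδ2
  have hpi := Real.pi_gt_three
  apply nu_lb (a := Real.pi/2) hε hδ hsd (by positivity)
  · linarith
  · intro θ hθ
    simp only [Set.mem_Icc] at hθ
    have hcs : Real.cos θ ^ 2 ≤ 1-ε := by
      have h1 : Real.cos θ ^ 2 = Real.sin (θ - Real.pi/2) ^ 2 := by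
        rw [show θ - Real.pi/2 = -(Real.pi/2 - θ) by ring, Real.sin_neg,
          Real.sin_pi_div_two_sub]
        ring
      have h2 : Real.sin (θ - Real.pi/2) ^ 2 ≤ (θ - Real.pi/2)^2 := Real.sin_sq_le_sq
      have h3 : (θ - Real.pi/2)^2 ≤ 1-ε := by
        have := Real.sq_sqrt hδ.le
        nlinarith [hθ.1, hθ.2]
      linarith [h1 ▸ h2]
    rw [Real.cos_two_mul]
    nlinarith [sq_nonneg (Real.cos θ), hε.2]

lemma tendsto_aux {c : ℝ} {g : ℝ → ℝ} (hg : Continuous g) (hg0 : g c = 0)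
    (hgpos : ∀ ε ∈ Set.Ioo (-1:ℝ) 1, 0 < g ε) :
    Filter.Tendsto (fun ε => (1/24)/(g ε)) (nhdsWithin c (Set.Ioo (-1:ℝ) 1)) Filter.atTop := by
  have h0 : Filter.Tendsto g (nhdsWithin c (Set.Ioo (-1:ℝ) 1)) (nhdsWithin 0 (Set.Ioi 0)) := by
    apply tendsto_nhdsWithin_of_tendsto_nhds_of_eventually_within
    · exact (hg0 ▸ hg.tendsto c).mono_left nhdsWithin_le_nhds
    · exact eventually_mem_nhdsWithin.mono fun ε hε => Set.mem_Ioi.mpr (hgpos ε hε)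
  have h1 := tendsto_inv_nhdsGT_zero.comp h0
  have h2 := h1.const_mul_atTop (show (0:ℝ) < 1/24 by norm_num)
  simpa [div_eq_mul_inv, Function.comp] using h2

lemma nu_tendsto_neg :
    Filter.Tendsto nu (nhdsWithin (-1:ℝ) (Set.Ioo (-1:ℝ) 1)) Filter.atTop := by
  apply Filter.tendsto_atTop_mono' _ (f₁ := fun ε => (1/24)/(1+ε))
  · filter_upwards [eventually_mem_nhdsWithin,
      (eventually_lt_nhds (show (-1:ℝ) < -1/2 by norm_num)).filter_mono nhdsWithin_le_nhds]
      with ε h1 h2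
    exact nu_lb_neg h1 h2
  · exact tendsto_aux (continuous_const.add continuous_id) (by norm_num)
      (fun ε hε => by simpa using by linarith [hε.1] : ∀ ε ∈ Set.Ioo (-1:ℝ) 1, 0 < 1+ε)

lemma nu_tendsto_pos :
    Filter.Tendsto nu (nhdsWithin (1:ℝ) (Set.Ioo (-1:ℝ) 1)) Filter.atTop := by
  apply Filter.tendsto_atTop_mono' _ (f₁ := fun ε => (1/24)/(1-ε))
  · filter_upwards [eventually_mem_nhdsWithin,
      (eventually_gt_nhds (show (1:ℝ)/2 < 1 by norm_num)).filter_mono nhdsWithin_le_nhds]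
      with ε h1 h2
    exact nu_lb_pos h1 h2
  · exact tendsto_aux (continuous_const.sub continuous_id) (by norm_num)
      (fun ε hε => by simpa using by linarith [hε.2] : ∀ ε ∈ Set.Ioo (-1:ℝ) 1, 0 < 1-ε)

lemma Gdiv {c : ℝ} (hnu : Filter.Tendsto nu (nhdsWithin c (Set.Ioo (-1:ℝ) 1)) Filter.atTop) :
    Filter.Tendsto (fun ε => Gg ε / nu ε) (nhdsWithin c (Set.Ioo (-1:ℝ) 1)) (nhds 0) := by
  apply squeeze_zero' (g := fun ε => (1 + Real.pi/2) * (nu ε) ^ (-(2:ℝ)/3))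
  · filter_upwards [eventually_mem_nhdsWithin] with ε hε
    exact div_nonneg (Gg_nonneg hε) (nu_pos hε).le
  · filter_upwards [eventually_mem_nhdsWithin] with ε hε
    have hn := nu_pos hε
    have h1 := Gg_le hε
    have key : nu ε ^ ((1:ℝ)/3) / nu ε = nu ε ^ (-(2:ℝ)/3) := by
      rw [div_eq_mul_inv, ← Real.rpow_neg_one (nu ε), ← Real.rpow_add hn]
      norm_num
    calc Gg ε / nu ε ≤ ((1 + Real.pi/2) * nu ε ^ ((1:ℝ)/3)) / nu ε :=
          (div_le_div_iff_of_pos_right hn).mpr h1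
      _ = (1 + Real.pi/2) * (nu ε ^ ((1:ℝ)/3) / nu ε) := by ring
      _ = (1 + Real.pi/2) * nu ε ^ (-(2:ℝ)/3) := by rw [key]
  · have h2 : Filter.Tendsto (fun x:ℝ => x ^ (-(2:ℝ)/3)) Filter.atTop (nhds 0) := by
      have := tendsto_rpow_neg_atTop (show (0:ℝ) < 2/3 by norm_num)
      simpa [neg_div] using this
    have h3 := (h2.comp hnu).const_mul (1 + Real.pi/2)
    simpa using h3

theorem stmt_11 :
    Filter.Tendsto (fun ε => lam ε / nu ε) (nhdsWithin (-1:ℝ) (Set.Ioo (-1:ℝ) 1)) (nhds 1) ∧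
    Filter.Tendsto (fun ε => lam ε / nu ε) (nhdsWithin (1:ℝ) (Set.Ioo (-1:ℝ) 1)) (nhds 0) := by
  constructor
  · have hGn := Gdiv nu_tendsto_neg
    have hid : Filter.Tendsto (fun ε:ℝ => ε) (nhdsWithin (-1:ℝ) (Set.Ioo (-1:ℝ) 1))
        (nhds (-1)) := Filter.tendsto_id.mono_right nhdsWithin_le_nhds
    have hnum := hGn.sub (((tendsto_const_nhds : Filter.Tendsto (fun _ : ℝ => (1:ℝ)) _ (nhds 1))).sub hid)
    have hden := hid.const_mul (2:ℝ)
    have hdiv := hnum.div hden (by norm_num)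
    have hval : ((0:ℝ) - (1 - (-1)))/(2 * (-1)) = 1 := by norm_num
    rw [hval] at hdiv
    apply hdiv.congr'
    filter_upwards [eventually_mem_nhdsWithin,
      (eventually_lt_nhds (show (-1:ℝ) < -1/2 by norm_num)).filter_mono nhdsWithin_le_nhds]
      with ε hε hlt
    have hid2 := identity hε
    have hν : nu ε ≠ 0 := (nu_pos hε).ne'
    have hε0 : ε ≠ 0 := by intro h; rw [h] at hlt; norm_num at hlt
    simp only [Pi.div_apply]
    field_simp
    linear_combination (-1) * hid2
  · have hGp := Gdiv nu_tendsto_pos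
    have hid : Filter.Tendsto (fun ε:ℝ => ε) (nhdsWithin (1:ℝ) (Set.Ioo (-1:ℝ) 1))
        (nhds 1) := Filter.tendsto_id.mono_right nhdsWithin_le_nhds
    have hnum := hGp.sub (((tendsto_const_nhds : Filter.Tendsto (fun _ : ℝ => (1:ℝ)) _ (nhds 1))).sub hid)
    have hden := hid.const_mul (2:ℝ)
    have hdiv := hnum.div hden (by norm_num)
    have hval : ((0:ℝ) - (1 - 1))/(2 * 1) = 0 := by norm_num
    rw [hval] at hdiv
    apply hdiv.congr'
    filter_upwards [eventually_mem_nhdsWithin,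
      (eventually_gt_nhds (show (1:ℝ)/2 < 1 by norm_num)).filter_mono nhdsWithin_le_nhds]
      with ε hε hgt
    have hid2 := identity hε
    have hν : nu ε ≠ 0 := (nu_pos hε).ne'
    have hε0 : ε ≠ 0 := by intro h; rw [h] at hgt; norm_num at hgt
    simp only [Pi.div_apply]
    field_simp
    linear_combination (-1) * hid2
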